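/- Let J = [s..j] and J' = [s'..j'] be integer intervals with |J| = |J'| ≥ 2 and j < j'. Set J̃ = J \ {j}, J̃' = J' \ {j'}, and define ψ := (δ(J,J') − γ(J,J')) − (δ(J,J̃') − γ(J,J̃')) − (δ(J̃,J') − γ(J̃,J')) + (δ(J̃,J̃') − γ(J̃,J̃')), where γ(Q,Q') = min(|{q' ∈ Q' : q' < min Q}|, |{q ∈ Q : q > max Q'}|) and δ(Q,Q') = min(|{q' ∈ Q' : q' > max Q}|, |{q ∈ Q : q < min Q'}|). Then ψ = 1. -/

import Mathlib

/-- `α(P,P') = min(|{p' ∈ P' : p' < min P}|, |{p ∈ P : p > max P'}|)` for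
`P = [r..i]`, `P' = [r'..i']`. -/
noncomputable def alphaPP (r i r' i' : ℤ) : ℕ :=
  min ((Finset.Icc r' i').filter (fun p => p < r)).card
      ((Finset.Icc r i).filter (fun p => i' < p)).card

/-- `β(P,P') = min(|{p' ∈ P' : p' > max P}|, |{p ∈ P : p < min P'}|)`. -/
noncomputable def betaPP (r i r' i' : ℤ) : ℕ :=
  min ((Finset.Icc r' i').filter (fun p => i < p)).card
      ((Finset.Icc r i).filter (fun p => p < r')).card

/-- The quantity `φ` for `I = [r..i]`, `I' = [r'..i']`, `Ĩ = I \ {i} = [r..i-1]`,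
`Ĩ' = I' \ {i'} = [r'..i'-1]`. -/
noncomputable def phiII (r i r' i' : ℤ) : ℤ :=
  ((betaPP r i r' i' : ℤ) - alphaPP r i r' i')
    - ((betaPP r i r' (i' - 1) : ℤ) - alphaPP r i r' (i' - 1))
    - ((betaPP r (i - 1) r' i' : ℤ) - alphaPP r (i - 1) r' i')
    + ((betaPP r (i - 1) r' (i' - 1) : ℤ) - alphaPP r (i - 1) r' (i' - 1))


lemma cardlt (a b c : ℤ) :
    ((Finset.Icc a b).filter (fun p => p < c)).card = (min b (c-1) + 1 - a).toNat := by
  rw [show (Finset.Icc a b).filter (fun p => p < c) = Finset.Icc a (min b (c-1)) by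
    ext x; simp only [Finset.mem_filter, Finset.mem_Icc]; omega, Int.card_Icc]

lemma cardgt (a b c : ℤ) :
    ((Finset.Icc a b).filter (fun p => c < p)).card = (b + 1 - max a (c+1)).toNat := by
  rw [show (Finset.Icc a b).filter (fun p => c < p) = Finset.Icc (max a (c+1)) b by
    ext x; simp only [Finset.mem_filter, Finset.mem_Icc]; omega, Int.card_Icc]

/-- for column intervals `J = [s..j]`, `J' = [s'..j']` with
`|J| = |J'| ≥ 2` and `j < j'`, the quantity `ψ` (built from the column
statistics `γ = α` and `δ = β`) equals `1`. Here `phiII s j s' j'` is exactly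
`ψ(J,J')` since `γ, δ` are given by the same formulas as `α, β`. -/
theorem stmt19 (s j s' j' : ℤ) (hJ : s ≤ j - 1) (hJ' : s' ≤ j' - 1)
    (hcard : (Finset.Icc s j).card = (Finset.Icc s' j').card)
    (hjj : j < j') :
    phiII s j s' j' = 1 := by
  rw [Int.card_Icc, Int.card_Icc] at hcard
  have hd : s' - s = j' - j := by omega
  have A1 : alphaPP s j s' j' = 0 := by
    simp only [alphaPP, cardlt, cardgt]; omega
  have A2 : alphaPP s j s' (j' - 1) = 0 := by
    simp only [alphaPP, cardlt, cardgt]; omega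
  have A3 : alphaPP s (j - 1) s' j' = 0 := by
    simp only [alphaPP, cardlt, cardgt]; omega
  have A4 : alphaPP s (j - 1) s' (j' - 1) = 0 := by
    simp only [alphaPP, cardlt, cardgt]; omega
  have B1 : (betaPP s j s' j' : ℤ) = min (j' - j) (j - s + 1) := by
    simp only [betaPP, cardlt, cardgt]; push_cast; omega
  have B2 : (betaPP s j s' (j' - 1) : ℤ) = min (j' - j - 1) (j - s) := by
    simp only [betaPP, cardlt, cardgt]; push_cast; omega
  have B3 : (betaPP s (j - 1) s' j' : ℤ) = min (j' - j) (j - s) := by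
    simp only [betaPP, cardlt, cardgt]; push_cast; omega
  have B4 : (betaPP s (j - 1) s' (j' - 1) : ℤ) = min (j' - j) (j - s) := by
    simp only [betaPP, cardlt, cardgt]; push_cast; omega
  rw [phiII, A1, A2, A3, A4, B1, B2, B3, B4]
  push_cast
  omega
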